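/- arXiv:0711.0477 — 2 statements merged into one kernel-verified Lean document; each statement's English description precedes it below -/
import Mathlib

section
/- For every integer n ≥ 1, the range of the Bost–Connes map ρₙ on the group algebra A = ℚ[ℚ/ℤ] equals the compressed algebra eₙA = {eₙ · a : a ∈ A}, where eₙ = ρₙ(1); consequently ρₙ is an isomorphism of A onto the compressed algebra eₙAeₙ = eₙA (A being commutative). -/
open AddMonoidAlgebra

/-- The rational group algebra `A = ℚ[ℚ/ℤ]` of `ℚ/ℤ = AddCircle (1 : ℚ)`. -/
abbrev BC.A : Type := AddMonoidAlgebra ℚ (AddCircle (1 : ℚ))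

/-- The Bost–Connes map `ρₙ : A → A`, the `ℚ`-linear map determined on the canonical
basis elements `e_r = single r 1` by `ρₙ(e_r) = (1/n) ∑_{s : n • s = r} e_s`, the
(finite) sum running over the `n` solutions `s ∈ ℚ/ℤ` of `n • s = r`. -/
noncomputable def BC.rho (n : ℕ) : BC.A →ₗ[ℚ] BC.A :=
  (Finsupp.lift BC.A ℚ (AddCircle (1 : ℚ)) fun r =>
    (n : ℚ)⁻¹ • ∑ᶠ (s : AddCircle (1 : ℚ)) (_ : n • s = r), AddMonoidAlgebra.single s (1 : ℚ))
  ∘ₗ (AddMonoidAlgebra.coeffLinearEquiv ℚ).toLinearMap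

/-!
On coefficients, `ρₙ(a)(s) = a(n • s) / n`. Consequently pushing `a` forward along `s ↦ n • s`
and then applying `ρₙ` is multiplication by `eₙ = ρₙ(1)`, which is `1/n` times the indicator of
the `n`-torsion. Since `n •` is surjective on the divisible group `ℚ/ℤ`, so is that pushforward,
and the range of `ρₙ` is `eₙ A`. Injectivity: `a(r) = n · ρₙ(a)(s)` for any `s` with `n • s = r`.
-/

open Function

theorem finite_setOf_nsmul_eq {G : Type*} [AddCommGroup G] {n : ℕ}
    (hG : {u : G | n • u = 0}.Finite) (r : G) : {s : G | n • s = r}.Finite := by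
  rcases Set.eq_empty_or_nonempty {s : G | n • s = r} with h | ⟨s₀, hs₀⟩
  · simp [h]
  · refine (hG.preimage (sub_left_injective (b := s₀)).injOn).subset fun s hs => ?_
    simp_all [smul_sub]

theorem nsmul_surjective_of_divisibleBy {G : Type*} [AddCommGroup G] [DivisibleBy G ℤ] {n : ℕ}
    (hn : n ≠ 0) : Surjective fun s : G => n • s := by
  simpa only [natCast_zsmul] using DivisibleBy.surjective_smul G ℤ (Int.natCast_ne_zero.mpr hn)

theorem AddMonoidAlgebra.mapDomain_surjective {R M N : Type*} [Semiring R] {f : M → N}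
    (hf : Surjective f) : Surjective (mapDomain (R := R) f) := fun y => by
  obtain ⟨v, hv⟩ := Finsupp.mapDomain_surjective hf y.coeff
  exact ⟨ofCoeff v, coeff_injective (by simpa using hv)⟩

namespace BC

local notation "G" => AddCircle (1 : ℚ)

theorem coeff_rho (n : ℕ) (a : A) (q : G) :
    (rho n a).coeff q = (n : ℚ)⁻¹ * a.coeff (n • q) := by
  obtain rfl | hn := eq_or_ne n 0
  · simp [rho]
  induction a using induction_linear with
  | zero => simp
  | add a b ha hb => simp [ha, hb, mul_add]
  | single r c =>
    -- `∑ᶠ` would be `0` on an infinite fibre; here the fibre of `n •` is finite.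
    have hfin := finite_setOf_nsmul_eq (AddCircle.finite_torsion (1 : ℚ) (Nat.pos_of_ne_zero hn)) r
    have hsum : ∑ᶠ (s : G) (_ : n • s = r), single s (1 : ℚ) = ∑ s ∈ hfin.toFinset, single s 1 :=
      finsum_cond_eq_sum_of_cond_iff _ fun _ => by simp
    simp [rho, hsum, coeff_sum, Finsupp.single_apply, eq_comm (a := r), mul_comm]

theorem rho_mapDomain_nsmul (n : ℕ) (a : A) : rho n (mapDomain (n • ·) a) = rho n 1 * a := by
  induction a using induction_linear with
  | zero => simp
  | add a b ha hb => simp [mapDomain_add, ha, hb, mul_add]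
  | single s c =>
    ext q
    have hker : (0 : G) = n • (q - s) ↔ n • s = n • q := by
      rw [smul_sub, eq_comm, sub_eq_zero, eq_comm]
    simp only [coeff_rho, coeff_mul_single_apply, mapDomain_single, ← sub_eq_add_neg, one_def,
      coeff_single, Finsupp.single_apply, hker]
    split_ifs <;> simp

theorem rho_injective {n : ℕ} (hn : n ≠ 0) : Injective (rho n) := fun a b h => by
  ext r
  obtain ⟨s, rfl⟩ := nsmul_surjective_of_divisibleBy hn r
  simpa [coeff_rho, hn] using congr_arg (fun x => x.coeff s) h

end BC

/-- For every `n ≥ 1`, the range of `ρₙ` is the compressed algebra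
`eₙ A = {eₙ · a : a ∈ A}` where `eₙ = ρₙ(1)`; together with injectivity this makes
`ρₙ` an isomorphism of `A` onto `eₙ A eₙ = eₙ A` (`A` being commutative). -/
theorem BC.rho_range (n : ℕ) (hn : 1 ≤ n) :
    Set.range (BC.rho n) = {x : BC.A | ∃ a : BC.A, x = BC.rho n 1 * a} ∧
      Function.Injective (BC.rho n) := by
  have hn0 : n ≠ 0 := Nat.one_le_iff_ne_zero.mp hn
  refine ⟨?_, BC.rho_injective hn0⟩
  rw [← (mapDomain_surjective (nsmul_surjective_of_divisibleBy hn0)).range_comp]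
  ext x
  simp [BC.rho_mapDomain_nsmul, eq_comm]
end

section
/- Let n ≥ 1 be an integer and let χ : A → ℂ be a ℚ-algebra homomorphism from the group algebra A = ℚ[ℚ/ℤ] to the complex numbers. Then the composite χ ∘ ρₙ is not identically zero if and only if χ(e_{1/n}) = 1, where 1/n denotes the class of (n)⁻¹ ∈ ℚ in ℚ/ℤ (equivalently, if and only if χ(e_s) = 1 for every s ∈ ℚ/ℤ with n • s = 0). -/
open AddMonoidAlgebra

/-!
A `ℚ`-algebra homomorphism `χ : ℚ[ℚ/ℤ] → ℂ` is the same as the additive character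
`ψ(s) = χ(e_s)` of `ℚ/ℤ`. As `ℚ/ℤ` is divisible, every `r` is `n • s` for some `s`, and
`ρₙ(e_r) = e_s ρₙ(1)`; so `χ ∘ ρₙ` vanishes iff `χ(ρₙ(1)) = n⁻¹ ∑_{n • t = 0} ψ(t)` does.
By orthogonality, this character sum over the finite group of `n`-torsion points vanishes
unless `ψ` is trivial on it, and that group is generated by `1/n`.
-/

namespace AddMonoidAlgebra

variable {k G A : Type*} [Semiring k] [AddMonoid G] [Monoid A]

noncomputable def charOf (χ : AddMonoidAlgebra k G →* A) : AddChar G A where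
  toFun g := χ (single g 1)
  map_zero_eq_one' := by rw [← one_def, map_one]
  map_add_eq_mul' a b := by rw [← map_mul, single_mul_single, one_mul]

@[simp]
lemma charOf_apply (χ : AddMonoidAlgebra k G →* A) (g : G) : charOf χ g = χ (single g 1) := rfl

end AddMonoidAlgebra

namespace AddChar

variable {G R : Type*} [AddGroup G] [CommRing R] [IsDomain R] [CharZero R]

lemma finsum_mem_addSubgroup_ne_zero_iff (ψ : AddChar G R) (H : AddSubgroup G) [Finite H] :
    ∑ᶠ g ∈ (H : Set G), ψ g ≠ 0 ↔ ∀ g ∈ H, ψ g = 1 := by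
  have := Fintype.ofFinite H
  rw [← finsum_set_coe_eq_finsum_mem, finsum_eq_sum_of_fintype]
  refine (sum_ne_zero_iff_eq_zero (ψ := ψ.compAddMonoidHom H.subtype)).trans ?_
  simp [AddChar.ext_iff]

end AddChar

namespace AddSubgroup

variable {A : Type*} [AddCommGroup A]

lemma coe_torsionBy_natCast (n : ℕ) : (torsionBy A n : Set A) = {u | n • u = 0} :=
  Set.ext fun _ ↦ torsionBy.nsmul_iff

lemma setOf_nsmul_eq_eq_image_add_torsionBy {n : ℕ} {r s : A} (hs : n • s = r) :
    {u | n • u = r} = (s + ·) '' (torsionBy A n) := by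
  ext u
  refine ⟨fun (hu : n • u = r) ↦ ⟨u - s, ?_, add_sub_cancel s u⟩, ?_⟩
  · rw [SetLike.mem_coe, torsionBy.nsmul_iff, smul_sub, hu, hs, sub_self]
  · rintro ⟨t, ht, rfl⟩
    rw [SetLike.mem_coe, torsionBy.nsmul_iff] at ht
    change n • (s + t) = r
    rw [smul_add, hs, ht, add_zero]

end AddSubgroup

namespace AddCircle

variable {𝕜 : Type*} [Field 𝕜] [LinearOrder 𝕜] [IsStrictOrderedRing 𝕜] {p : 𝕜}

lemma finite_torsionBy (n : ℕ) [NeZero n] :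
    (AddSubgroup.torsionBy (AddCircle p) n : Set (AddCircle p)).Finite :=
  (finite_torsion p (Nat.pos_of_neZero n)).subset fun _ ↦ AddSubgroup.torsionBy.nsmul_iff.mp

instance (n : ℕ) [NeZero n] : Finite (AddSubgroup.torsionBy (AddCircle p) n) :=
  (finite_torsionBy n).to_subtype

lemma forall_mem_torsionBy_addChar_eq_one_iff {M : Type*} [Monoid M] [Fact (0 < p)]
    (ψ : AddChar (AddCircle p) M) {n : ℕ} (hn : 0 < n) :
    (∀ u ∈ AddSubgroup.torsionBy (AddCircle p) n, ψ u = 1) ↔ ψ ↑(p / n) = 1 := by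
  simp only [AddSubgroup.torsionBy.nsmul_iff]
  refine ⟨fun h ↦ h _ ?_, fun h u hu ↦ ?_⟩
  · simpa [addOrderOf_period_div hn] using addOrderOf_nsmul_eq_zero ((p / n : 𝕜) : AddCircle p)
  · obtain ⟨m, -, rfl⟩ := (AddCircle.nsmul_eq_zero_iff hn).mp hu
    rw [natCast_div_mul_eq_nsmul, ψ.map_nsmul_eq_pow, h, one_pow]

end AddCircle

namespace BC

lemma rho_single (n : ℕ) (r : AddCircle (1 : ℚ)) :
    rho n (single r 1) = (n : ℚ)⁻¹ • ∑ᶠ s ∈ {s | n • s = r}, single s (1 : ℚ) := by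
  simp [rho]

variable {n : ℕ} [NeZero n]

lemma rho_single_eq_single_mul_rho_one {r s : AddCircle (1 : ℚ)} (hs : n • s = r) :
    rho n (single r 1) = single s 1 * rho n 1 := by
  rw [one_def, rho_single, rho_single, AddSubgroup.setOf_nsmul_eq_eq_image_add_torsionBy hs,
    ← AddSubgroup.coe_torsionBy_natCast, finsum_mem_image (add_right_injective s).injOn,
    mul_smul_comm, mul_finsum_mem' _ _ (AddCircle.finite_torsionBy n)]
  simp only [single_mul_single, one_mul]

lemma map_rho_one (χ : A →ₐ[ℚ] ℂ) :
    χ (rho n 1) = (n : ℂ)⁻¹ * ∑ᶠ t ∈ (AddSubgroup.torsionBy (AddCircle (1 : ℚ)) n : Set _),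
      charOf (χ : A →* ℂ) t := by
  rw [one_def, rho_single, ← AddSubgroup.coe_torsionBy_natCast, map_smul, Rat.smul_def,
    ← AddMonoidHom.coe_coe χ, AddMonoidHom.map_finsum_mem _ _ (AddCircle.finite_torsionBy n)]
  simp

lemma forall_map_rho_eq_zero_iff (χ : A →ₐ[ℚ] ℂ) :
    (∀ x, χ (rho n x) = 0) ↔ χ (rho n 1) = 0 := by
  refine ⟨fun h ↦ h 1, fun h ↦ ?_⟩
  suffices χ.toLinearMap ∘ₗ rho n = 0 from fun x ↦ congr($this x)
  refine lhom_ext' fun r ↦ LinearMap.ext_ring ?_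
  obtain ⟨s, hs⟩ := DivisibleBy.surjective_smul (AddCircle (1 : ℚ)) ℤ
    (Int.natCast_ne_zero.mpr (NeZero.ne n)) r
  simp only [natCast_zsmul] at hs
  simp [rho_single_eq_single_mul_rho_one hs, h]

lemma not_forall_map_rho_eq_zero_iff (χ : A →ₐ[ℚ] ℂ) :
    (¬ ∀ x, χ (rho n x) = 0) ↔
      ∀ s ∈ AddSubgroup.torsionBy (AddCircle (1 : ℚ)) n, charOf (χ : A →* ℂ) s = 1 := by
  rw [forall_map_rho_eq_zero_iff, map_rho_one, ← ne_eq, mul_ne_zero_iff,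
    AddChar.finsum_mem_addSubgroup_ne_zero_iff]
  simp [NeZero.ne n]

end BC

/-- For `n ≥ 1` and a `ℚ`-algebra homomorphism `χ : ℚ[ℚ/ℤ] → ℂ`, the composite
`χ ∘ ρₙ` is not identically zero iff `χ(e_{1/n}) = 1`, where `1/n` is the class of
`n⁻¹ ∈ ℚ` in `ℚ/ℤ`; equivalently, iff `χ(e_s) = 1` for every `s` with `n • s = 0`. -/
theorem BC.comp_rho_ne_zero_iff (n : ℕ) (hn : 1 ≤ n) (χ : BC.A →ₐ[ℚ] ℂ) :
    ((¬ ∀ x : BC.A, χ (BC.rho n x) = 0) ↔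
      χ (AddMonoidAlgebra.single ((((n : ℚ)⁻¹ : ℚ) : AddCircle (1 : ℚ))) (1 : ℚ)) = 1) ∧
    ((¬ ∀ x : BC.A, χ (BC.rho n x) = 0) ↔
      ∀ s : AddCircle (1 : ℚ), n • s = 0 →
        χ (AddMonoidAlgebra.single s (1 : ℚ)) = 1) := by
  have : NeZero n := NeZero.of_pos hn
  have trivial_on_torsion := BC.not_forall_map_rho_eq_zero_iff (n := n) χ
  constructor
  · simpa using trivial_on_torsion.trans (AddCircle.forall_mem_torsionBy_addChar_eq_one_iff _ hn)
  · simpa [AddSubgroup.torsionBy.nsmul_iff] using trivial_on_torsion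
end
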